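/- Energy gap bound via the inner minimizer: let R be a probability measure on X×Y, φ a bounded measurable function, P ∈ Π(μ,ν) with bounded log-density w.r.t. R, and let P̂ be the minimizer over Π(μ,ν) of π ↦ ∫ φ dπ + H(π‖R). Suppose P̂ has density dP̂/dR = exp(c − f(x) − g(y) − φ(x,y)) for bounded potentials f, g and constant c. Then for every π ∈ Π(μ,ν) with finite entropy, H(P‖P̂) ≥ [H(P‖R) + ∫ φ dP] − [H(π‖R) + ∫ φ dπ]. -/

import Mathlib

open MeasureTheory

/-- `π` is a coupling of `μ` and `ν`. -/
def IsCoupling {X Y : Type*} [MeasurableSpace X] [MeasurableSpace Y]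
    (π : Measure (X × Y)) (μ : Measure X) (ν : Measure Y) : Prop :=
  π.map Prod.fst = μ ∧ π.map Prod.snd = ν

/-- Relative entropy `H(π‖θ) = ∫ log (dπ/dθ) dπ`. -/
noncomputable def relEnt {Z : Type*} [MeasurableSpace Z] (π θ : Measure Z) : ℝ :=
  ∫ z, Real.log (π.rnDeriv θ z).toReal ∂π

lemma integrable_of_bdd {Z : Type*} [MeasurableSpace Z] {μ : Measure Z} [IsFiniteMeasure μ]
    {h : Z → ℝ} (hm : AEStronglyMeasurable h μ) {C : ℝ} (hb : ∀ᵐ z ∂μ, |h z| ≤ C) :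
    Integrable h μ :=
  Integrable.mono' (integrable_const C) hm (by simpa [Real.norm_eq_abs] using hb)

/-- Energy gap bound via the inner minimizer: if `P̂` minimizes
`π ↦ ∫ φ dπ + H(π‖R)` over `Π(μ,ν)` and has Gibbs density
`dP̂/dR = exp(c − f(x) − g(y) − φ(x,y))`, then for every coupling `π` with finite entropy,
`H(P‖P̂) ≥ [H(P‖R) + ∫ φ dP] − [H(π‖R) + ∫ φ dπ]`. -/
theorem stmt11 {X Y : Type*} [MeasurableSpace X] [MeasurableSpace Y]
    (μ : Measure X) [IsProbabilityMeasure μ] (ν : Measure Y) [IsProbabilityMeasure ν]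
    (R : Measure (X × Y)) [IsProbabilityMeasure R]
    (φ : X × Y → ℝ) (hφm : Measurable φ) (hφb : ∃ C, ∀ z, |φ z| ≤ C)
    (P : Measure (X × Y)) [IsProbabilityMeasure P] (hPc : IsCoupling P μ ν)
    (hPR : P ≪ R)
    (hPd : ∃ C, ∀ᵐ z ∂ R, |Real.log (P.rnDeriv R z).toReal| ≤ C)
    (Phat : Measure (X × Y)) [IsProbabilityMeasure Phat] (hPhc : IsCoupling Phat μ ν)
    (f : X → ℝ) (hfm : Measurable f) (hfb : ∃ C, ∀ x, |f x| ≤ C)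
    (g : Y → ℝ) (hgm : Measurable g) (hgb : ∃ C, ∀ y, |g y| ≤ C)
    (c : ℝ)
    (hGibbs : Phat =
      R.withDensity (fun z => ENNReal.ofReal (Real.exp (c - f z.1 - g z.2 - φ z))))
    (hmin : ∀ π : Measure (X × Y), IsProbabilityMeasure π → IsCoupling π μ ν → π ≪ R →
      Integrable (fun z => Real.log (π.rnDeriv R z).toReal) π →
      ∫ z, φ z ∂Phat + relEnt Phat R ≤ ∫ z, φ z ∂π + relEnt π R)
    (π : Measure (X × Y)) [IsProbabilityMeasure π] (hπc : IsCoupling π μ ν) (hπR : π ≪ R)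
    (hπint : Integrable (fun z => Real.log (π.rnDeriv R z).toReal) π) :
    (relEnt P R + ∫ z, φ z ∂P) - (relEnt π R + ∫ z, φ z ∂π) ≤ relEnt P Phat := by
  obtain ⟨Cφ, hφb⟩ := hφb
  obtain ⟨Cf, hfb⟩ := hfb
  obtain ⟨Cg, hgb⟩ := hgb
  obtain ⟨Cd, hPd⟩ := hPd
  set s : X × Y → ℝ := fun z => c - f z.1 - g z.2 - φ z with hs
  have hsm : Measurable s := by
    apply Measurable.sub
    apply Measurable.sub
    · exact (measurable_const.sub (hfm.comp measurable_fst))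
    · exact hgm.comp measurable_snd
    · exact hφm
  set e : X × Y → ENNReal := fun z => ENNReal.ofReal (Real.exp (s z)) with he
  have hem : Measurable e := (Real.measurable_exp.comp hsm).ennreal_ofReal
  have he0 : ∀ z, e z ≠ 0 := fun z => by
    simp [he, ENNReal.ofReal_eq_zero, not_le, Real.exp_pos]
  have heT : ∀ z, e z ≠ ⊤ := fun z => ENNReal.ofReal_ne_top
  have hetoReal : ∀ z, (e z).toReal = Real.exp (s z) := fun z =>
    ENNReal.toReal_ofReal (Real.exp_pos _).le
  have hPhR : Phat ≪ R := hGibbs ▸ withDensity_absolutelyContinuous R e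
  -- rnDeriv of Phat wrt R
  have hPhd : Phat.rnDeriv R =ᵐ[R] e := hGibbs ▸ Measure.rnDeriv_withDensity R hem
  -- rnDeriv of P wrt Phat
  have hPPh : P.rnDeriv Phat =ᵐ[R] fun z => (e z)⁻¹ * P.rnDeriv R z := by
    rw [hGibbs]
    exact Measure.rnDeriv_withDensity_right P R hem.aemeasurable
      (Filter.Eventually.of_forall he0) (Filter.Eventually.of_forall heT)
  -- a.e. P facts
  have hpos : ∀ᵐ z ∂P, P.rnDeriv R z ≠ 0 := by
    filter_upwards [Measure.rnDeriv_pos hPR] with z hz using hz.ne'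
  have hlt : ∀ᵐ z ∂P, P.rnDeriv R z ≠ ⊤ := hPR.ae_le (Measure.rnDeriv_ne_top P R)
  -- key pointwise identity a.e. P
  have hkey : ∀ᵐ z ∂P, Real.log (P.rnDeriv Phat z).toReal
      = Real.log (P.rnDeriv R z).toReal - s z := by
    filter_upwards [hPR.ae_le hPPh, hpos, hlt] with z hz h0 hT
    rw [hz, ENNReal.toReal_mul, Real.log_mul, ENNReal.toReal_inv, hetoReal,
      Real.log_inv, Real.log_exp]
    · ring
    · rw [ENNReal.toReal_inv, hetoReal]
      positivity
    · intro h
      rw [ENNReal.toReal_eq_zero_iff] at h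
      tauto
  -- integrability
  have hLm : Measurable fun z => Real.log (P.rnDeriv R z).toReal :=
    (Measure.measurable_rnDeriv P R).ennreal_toReal.log
  have hLint : Integrable (fun z => Real.log (P.rnDeriv R z).toReal) P :=
    integrable_of_bdd hLm.aestronglyMeasurable (hPR.ae_le hPd)
  have hfint : ∀ (θ : Measure (X × Y)), IsProbabilityMeasure θ →
      Integrable (fun z => f z.1) θ := fun θ _ =>
    integrable_of_bdd ((hfm.comp measurable_fst).aestronglyMeasurable)
      (Filter.Eventually.of_forall fun z => hfb z.1)
  have hgint : ∀ (θ : Measure (X × Y)), IsProbabilityMeasure θ →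
      Integrable (fun z => g z.2) θ := fun θ _ =>
    integrable_of_bdd ((hgm.comp measurable_snd).aestronglyMeasurable)
      (Filter.Eventually.of_forall fun z => hgb z.2)
  have hφint : ∀ (θ : Measure (X × Y)), IsProbabilityMeasure θ →
      Integrable φ θ := fun θ _ =>
    integrable_of_bdd hφm.aestronglyMeasurable (Filter.Eventually.of_forall hφb)
  have hsint : ∀ (θ : Measure (X × Y)), IsProbabilityMeasure θ → Integrable s θ :=
    fun θ hθ => (((integrable_const c).sub (hfint θ hθ)).sub (hgint θ hθ)).sub (hφint θ hθ)
  -- integral of s over a coupling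
  have hsInt : ∀ (θ : Measure (X × Y)), IsProbabilityMeasure θ → IsCoupling θ μ ν →
      ∫ z, s z ∂θ = c - ∫ x, f x ∂μ - ∫ y, g y ∂ν - ∫ z, φ z ∂θ := by
    intro θ hθ hθc
    have h1 : ∫ z, f z.1 ∂θ = ∫ x, f x ∂μ := by
      rw [← hθc.1, integral_map measurable_fst.aemeasurable hfm.aestronglyMeasurable]
    have h2 : ∫ z, g z.2 ∂θ = ∫ y, g y ∂ν := by
      rw [← hθc.2, integral_map measurable_snd.aemeasurable hgm.aestronglyMeasurable]
    have i3 : Integrable (fun z : X × Y => c - f z.1) θ := (integrable_const c).sub (hfint θ hθ)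
    have i2 : Integrable (fun z : X × Y => c - f z.1 - g z.2) θ := i3.sub (hgint θ hθ)
    simp only [hs]
    rw [integral_sub i2 (hφint θ hθ), integral_sub i3 (hgint θ hθ),
      integral_sub (integrable_const c) (hfint θ hθ), integral_const]
    simp [h1, h2, measure_univ]
  -- relEnt Phat R = ∫ s dPhat
  have hPhatEnt : relEnt Phat R = c - ∫ x, f x ∂μ - ∫ y, g y ∂ν - ∫ z, φ z ∂Phat := by
    have : relEnt Phat R = ∫ z, s z ∂Phat := by
      apply integral_congr_ae
      filter_upwards [hPhR.ae_le hPhd] with z hz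
      rw [hz, hetoReal, Real.log_exp]
    rw [this, hsInt Phat inferInstance hPhc]
  -- relEnt P Phat = relEnt P R - ∫ s dP
  have hPEnt : relEnt P Phat = relEnt P R - ∫ z, s z ∂P := by
    have : relEnt P Phat = ∫ z, (Real.log (P.rnDeriv R z).toReal - s z) ∂P :=
      integral_congr_ae hkey
    rw [this, integral_sub hLint (hsint P inferInstance)]
    rfl
  have hPs := hsInt P inferInstance hPc
  have hm := hmin π inferInstance hπc hπR hπint
  rw [hPEnt, hPs, hPhatEnt] at *
  linarith
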